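/- arXiv:1811.05808 — 4 statements merged into one kernel-verified Lean document; each statement's English description precedes it below -/
import Mathlib

section
/- Let G be a finite simple graph and ℓ ≥ 1 an integer. If G is ℓ-tangle-free, then for every pair of vertices i, j there are at most two self-avoiding paths of length at most ℓ from i to j; in particular, every entry of the path expansion matrix B^(ℓ) satisfies B^(ℓ)_{ij} ≤ 2. -/
/-- The `(i,j)` entry of the path expansion matrix `B^(ℓ)`: the number of self-avoiding
paths of length `ℓ` from `i` to `j`. -/
noncomputable def pathCount {V : Type*} (G : SimpleGraph V) (ℓ : ℕ) (i j : V) : ℕ :=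
  Set.ncard {p : G.Walk i j | p.IsPath ∧ p.length = ℓ}

/-- A graph is `ℓ`-tangle-free if, for every vertex `v`, any two cycles all of whose
vertices lie at graph distance at most `ℓ` from `v` have the same edge set. -/
def TangleFree {V : Type*} [DecidableEq V] (G : SimpleGraph V) (ℓ : ℕ) : Prop :=
  ∀ (v a b : V) (c₁ : G.Walk a a) (c₂ : G.Walk b b),
    c₁.IsCycle → c₂.IsCycle →
    (∀ w ∈ c₁.support, G.edist v w ≤ (ℓ : ℕ∞)) →
    (∀ w ∈ c₂.support, G.edist v w ≤ (ℓ : ℕ∞)) →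
    c₁.edges.toFinset = c₂.edges.toFinset

/-!
Two distinct paths `p ≠ q` with the same endpoints yield a cycle whose edges lie in the symmetric
difference of their edge sets: both paths have odd degree exactly at the two endpoints, so every
vertex has even degree in the symmetric difference, while the first vertex of a longest path in a
finite acyclic graph is a leaf.

Given three distinct paths of length at most `ℓ` from `i` to `j`, the three cycles obtained from
pairs of them stay within distance `ℓ` of `i`, so tangle-freeness gives them a common edge set. An
edge of it lies in exactly one of `p₁, p₂`, in exactly one of `p₁, p₃` and in exactly one of
`p₂, p₃`, which is impossible.
-/

open scoped symmDiff

theorem Set.even_ncard_symmDiff_iff {α : Type*} {s t : Set α} (hs : s.Finite) (ht : t.Finite) :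
    Even (s ∆ t).ncard ↔ (Even s.ncard ↔ Even t.ncard) := by
  have hsub : s ∩ t ⊆ s ∪ t := Set.inter_subset_left.trans Set.subset_union_left
  have hcard : (s ∆ t).ncard + 2 * (s ∩ t).ncard = s.ncard + t.ncard := by
    rw [show s ∆ t = (s ∪ t) \ (s ∩ t) from symmDiff_eq_sup_sdiff_inf s t,
      Set.ncard_sdiff hsub (hs.inter_of_left t), ← Set.ncard_union_add_ncard_inter s t hs ht]
    have := Set.ncard_le_ncard hsub (hs.union ht)
    omega
  rw [← Nat.even_add, ← hcard, Nat.even_add]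
  simp

theorem Set.ncard_le_two_of_forall_eq_or_eq {α : Type*} {s : Set α}
    (h : ∀ a ∈ s, ∀ b ∈ s, ∀ c ∈ s, a = b ∨ a = c ∨ b = c) : s.ncard ≤ 2 := by
  rcases s.finite_or_infinite with hs | hs
  · by_contra! h2
    obtain ⟨a, ha, b, hb, c, hc, hab, hac, hbc⟩ := (Set.two_lt_ncard hs).mp h2
    rcases h a ha b hb c hc with h | h | h <;> contradiction
  · simp [hs.ncard]

namespace SimpleGraph

variable {V : Type*} {G : SimpleGraph V}

theorem exists_isCycle_of_forall_even_ncard_neighborSet [Finite G.edgeSet]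
    (hG : G.edgeSet.Nonempty) (heven : ∀ v, Even (G.neighborSet v).ncard) :
    ∃ (u : V) (c : G.Walk u u), c.IsCycle := by
  by_contra hcycle
  have hacyclic : G.IsAcyclic := fun u c hc => hcycle ⟨u, c, hc⟩
  obtain ⟨e, he⟩ := hG
  induction e using Sym2.ind with | _ a b => ?_
  rw [mem_edgeSet] at he
  have : Nonempty V := ⟨a⟩
  obtain ⟨u, v, p, hp, hlongest⟩ := Walk.exists_isPath_forall_isPath_length_le_length G
  have hnil : ¬ p.Nil := by
    rw [← Walk.length_eq_zero_iff]
    have := hlongest a b (.cons he .nil) (Walk.IsPath.nil.cons (by simpa using he.ne))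
    rw [Walk.length_cons, Walk.length_nil] at this
    omega
  have hleaf : G.neighborSet u = {p.snd} := by
    ext w
    refine ⟨fun huw => ?_, fun hw => hw ▸ p.adj_snd hnil⟩
    have hw : w ∈ p.support := by
      by_contra hw
      have := hlongest w v (Walk.cons (G.adj_symm huw) p) (hp.cons hw)
      simp at this
    exact hacyclic.eq_snd_of_adj_start hp huw hw
  simpa [hleaf] using heven u

namespace Walk

lemma IsPath.odd_ncard_neighborSet_toSubgraph_iff {u v w : V} {p : G.Walk u v} (hp : p.IsPath)
    (huv : u ≠ v) : Odd (p.toSubgraph.neighborSet w).ncard ↔ w = u ∨ w = v := by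
  rcases eq_or_ne w u with rfl | hu
  · simp [hp.neighborSet_toSubgraph_startpoint (not_nil_of_ne huv)]
  rcases eq_or_ne w v with rfl | hv
  · simp [hp.neighborSet_toSubgraph_endpoint (not_nil_of_ne huv)]
  simp only [hu, hv, or_self, iff_false, Nat.not_odd_iff_even]
  by_cases hw : w ∈ p.support
  · obtain ⟨i, rfl, hi⟩ := mem_support_iff_exists_getVert.mp hw
    have hi0 : i ≠ 0 := by rintro rfl; simp at hu
    have hil : i < p.length := lt_of_le_of_ne hi (by rintro rfl; simp at hv)
    simp [hp.ncard_neighborSet_toSubgraph_internal_eq_two hi0 hil]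
  · have : p.toSubgraph.neighborSet w = ∅ :=
      Set.eq_empty_of_forall_notMem fun x hx => hw ((p.mem_verts_toSubgraph).mp hx.fst_mem)
    simp [this]

lemma IsPath.eq_of_edgeSet_eq {u v : V} {p q : G.Walk u v} (hp : p.IsPath) (hq : q.IsPath)
    (h : p.edgeSet = q.edgeSet) : p = q := by
  induction p with
  | nil => exact (isPath_iff_nil.mp hq).eq_nil.symm
  | @cons u x v hux p ih =>
    cases q with
    | nil =>
      rw [edgeSet_cons, edgeSet_nil] at h
      exact absurd h (Set.insert_nonempty _ _).ne_empty
    | @cons _ y _ huy q =>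
      have hux_mem : s(u, x) ∈ (cons huy q).edges := by
        rw [← mem_edgeSet, ← h, edgeSet_cons]; exact Set.mem_insert _ _
      obtain rfl : y = x := by
        simpa using hq.snd_of_toSubgraph_adj (adj_toSubgraph_iff_mem_edges.mpr hux_mem)
      rw [cons_isPath_iff] at hp hq
      have hnotMem : ∀ r : G.Walk y v, u ∉ r.support → s(u, y) ∉ r.edgeSet := fun r hr he =>
        hr (r.fst_mem_support_of_mem_edges he)
      rw [edgeSet_cons, edgeSet_cons] at h
      rw [ih hp.1 hq.1 (by
        rw [← Set.insert_sdiff_self_of_notMem (hnotMem p hp.2), h,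
          Set.insert_sdiff_self_of_notMem (hnotMem q hq.2)])]

theorem IsPath.exists_isCycle_edgeSet_subset_symmDiff {u v : V} {p q : G.Walk u v}
    (hp : p.IsPath) (hq : q.IsPath) (hpq : p ≠ q) :
    ∃ (a : V) (c : G.Walk a a), c.IsCycle ∧ c.edgeSet ⊆ p.edgeSet ∆ q.edgeSet := by
  have huv : u ≠ v := by
    rintro rfl
    exact hpq ((isPath_iff_nil.mp hp).eq_nil.trans (isPath_iff_nil.mp hq).eq_nil.symm)
  set H := fromEdgeSet (p.edgeSet ∆ q.edgeSet)
  have hHG : H ≤ G := fun a b hab => by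
    obtain ⟨he | he, -⟩ := (fromEdgeSet_adj _).mp hab
    · exact p.adj_of_mem_edges he.1
    · exact q.adj_of_mem_edges he.1
  have : Finite H.edgeSet := by
    rw [edgeSet_fromEdgeSet]
    exact ((p.edges.finite_toSet.union q.edges.finite_toSet).subset
      (Set.sdiff_subset.trans Set.symmDiff_subset_union)).to_subtype
  have hneighbor : ∀ w, H.neighborSet w =
      p.toSubgraph.neighborSet w ∆ q.toSubgraph.neighborSet w := fun w => by
    ext x
    simp only [H, mem_neighborSet, fromEdgeSet_adj, Set.mem_symmDiff, mem_edgeSet,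
      Subgraph.mem_neighborSet, adj_toSubgraph_iff_mem_edges, and_iff_left_iff_imp]
    rintro (⟨he, -⟩ | ⟨he, -⟩)
    exacts [(p.adj_of_mem_edges he).ne, (q.adj_of_mem_edges he).ne]
  have hne : H.edgeSet.Nonempty := by
    obtain ⟨e, he⟩ := Set.symmDiff_nonempty.mpr fun h => hpq (hp.eq_of_edgeSet_eq hq h)
    have heG : e ∈ G.edgeSet := by
      rcases Set.symmDiff_subset_union he with he | he
      exacts [p.edges_subset_edgeSet he, q.edges_subset_edgeSet he]
    exact ⟨e, edgeSet_fromEdgeSet _ ▸ ⟨he, G.not_isDiag_of_mem_edgeSet heG⟩⟩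
  obtain ⟨a, c, hc⟩ := exists_isCycle_of_forall_even_ncard_neighborSet hne fun w => by
    rw [hneighbor, Set.even_ncard_symmDiff_iff p.finite_neighborSet_toSubgraph
      q.finite_neighborSet_toSubgraph, ← Nat.not_odd_iff_even, ← Nat.not_odd_iff_even,
      hp.odd_ncard_neighborSet_toSubgraph_iff huv, hq.odd_ncard_neighborSet_toSubgraph_iff huv]
  refine ⟨a, c.mapLe hHG, hc.mapLe hHG, ?_⟩
  rw [edgeSet_mapLe_eq_edgeSet]
  exact fun e he => (edgeSet_fromEdgeSet _ ▸ c.edges_subset_edgeSet he).1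

lemma edist_le_length_of_mem_support {u v w : V} (p : G.Walk u v) (hw : w ∈ p.support) :
    G.edist u w ≤ p.length := by
  classical
  exact (p.takeUntil w hw).edist_le.trans (by exact_mod_cast p.length_takeUntil_le_length hw)

theorem IsPath.exists_isCycle_edgeSet_subset_symmDiff_edist_le {u v : V} {ℓ : ℕ}
    {p q : G.Walk u v} (hp : p.IsPath) (hq : q.IsPath) (hpq : p ≠ q)
    (hpℓ : p.length ≤ ℓ) (hqℓ : q.length ≤ ℓ) :
    ∃ (a : V) (c : G.Walk a a), c.IsCycle ∧ c.edgeSet ⊆ p.edgeSet ∆ q.edgeSet ∧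
      ∀ w ∈ c.support, G.edist u w ≤ ℓ := by
  obtain ⟨a, c, hc, hcpq⟩ := hp.exists_isCycle_edgeSet_subset_symmDiff hq hpq
  refine ⟨a, c, hc, hcpq, fun w hw => ?_⟩
  obtain ⟨e, he, hwe⟩ := (mem_support_iff_exists_mem_edges_of_not_nil hc.not_nil).mp hw
  rcases Set.symmDiff_subset_union (hcpq he) with he | he
  · exact (p.edist_le_length_of_mem_support
      (mem_support_iff_exists_mem_edges.mpr (.inr ⟨e, he, hwe⟩))).trans (by exact_mod_cast hpℓ)
  · exact (q.edist_le_length_of_mem_support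
      (mem_support_iff_exists_mem_edges.mpr (.inr ⟨e, he, hwe⟩))).trans (by exact_mod_cast hqℓ)

end Walk

end SimpleGraph

open SimpleGraph

theorem TangleFree.eq_or_eq_or_eq_of_isPath {V : Type*} [DecidableEq V] {G : SimpleGraph V}
    {ℓ : ℕ} (htf : TangleFree G ℓ) {u v : V} {p₁ p₂ p₃ : G.Walk u v}
    (h₁ : p₁.IsPath) (h₂ : p₂.IsPath) (h₃ : p₃.IsPath)
    (hℓ₁ : p₁.length ≤ ℓ) (hℓ₂ : p₂.length ≤ ℓ) (hℓ₃ : p₃.length ≤ ℓ) :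
    p₁ = p₂ ∨ p₁ = p₃ ∨ p₂ = p₃ := by
  by_contra! ⟨h₁₂, h₁₃, h₂₃⟩
  obtain ⟨_, c₁₂, hc₁₂, hsub₁₂, hnear₁₂⟩ :=
    h₁.exists_isCycle_edgeSet_subset_symmDiff_edist_le h₂ h₁₂ hℓ₁ hℓ₂
  obtain ⟨_, c₁₃, hc₁₃, hsub₁₃, hnear₁₃⟩ :=
    h₁.exists_isCycle_edgeSet_subset_symmDiff_edist_le h₃ h₁₃ hℓ₁ hℓ₃
  obtain ⟨_, c₂₃, hc₂₃, hsub₂₃, hnear₂₃⟩ :=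
    h₂.exists_isCycle_edgeSet_subset_symmDiff_edist_le h₃ h₂₃ hℓ₂ hℓ₃
  have hedges : ∀ {x : V} (c : G.Walk x x), c.IsCycle → (∀ w ∈ c.support, G.edist u w ≤ ℓ) →
      c.edgeSet = c₁₂.edgeSet := fun c hc hnear => by
    rw [← Walk.coe_edges_toFinset, ← Walk.coe_edges_toFinset,
      htf u _ _ c c₁₂ hc hc₁₂ hnear hnear₁₂]
  obtain ⟨e, (he : e ∈ c₁₂.edgeSet), -⟩ :=
    (Walk.mem_support_iff_exists_mem_edges_of_not_nil hc₁₂.not_nil).mp c₁₂.start_mem_support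
  have he₁₂ := hsub₁₂ he
  have he₁₃ := hsub₁₃ (by rwa [hedges c₁₃ hc₁₃ hnear₁₃])
  have he₂₃ := hsub₂₃ (by rwa [hedges c₂₃ hc₂₃ hnear₂₃])
  simp only [Set.mem_symmDiff] at he₁₂ he₁₃ he₂₃
  tauto

theorem tangleFree_pathCount_le_two_general {V : Type*} [DecidableEq V]
    (G : SimpleGraph V) (ℓ : ℕ) (htf : TangleFree G ℓ) (i j : V) :
    Set.ncard {p : G.Walk i j | p.IsPath ∧ p.length ≤ ℓ} ≤ 2 ∧
    pathCount G ℓ i j ≤ 2 := by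
  have hthree : ∀ p₁ ∈ {p : G.Walk i j | p.IsPath ∧ p.length ≤ ℓ},
      ∀ p₂ ∈ {p : G.Walk i j | p.IsPath ∧ p.length ≤ ℓ},
      ∀ p₃ ∈ {p : G.Walk i j | p.IsPath ∧ p.length ≤ ℓ}, p₁ = p₂ ∨ p₁ = p₃ ∨ p₂ = p₃ :=
    fun _ h₁ _ h₂ _ h₃ => htf.eq_or_eq_or_eq_of_isPath h₁.1 h₂.1 h₃.1 h₁.2 h₂.2 h₃.2
  refine ⟨Set.ncard_le_two_of_forall_eq_or_eq hthree,
    Set.ncard_le_two_of_forall_eq_or_eq fun p₁ h₁ p₂ h₂ p₃ h₃ => ?_⟩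
  exact hthree p₁ ⟨h₁.1, h₁.2.le⟩ p₂ ⟨h₂.1, h₂.2.le⟩ p₃ ⟨h₃.1, h₃.2.le⟩

/-- In an `ℓ`-tangle-free graph, there are at most two self-avoiding paths of length
at most `ℓ` between any two vertices; in particular `B^(ℓ)_{ij} ≤ 2`. -/
theorem tangleFree_pathCount_le_two {V : Type*} [Fintype V] [DecidableEq V]
    (G : SimpleGraph V) (ℓ : ℕ) (hℓ : 1 ≤ ℓ) (htf : TangleFree G ℓ) (i j : V) :
    Set.ncard {p : G.Walk i j | p.IsPath ∧ p.length ≤ ℓ} ≤ 2 ∧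
    pathCount G ℓ i j ≤ 2 :=
  tangleFree_pathCount_le_two_general G ℓ htf i j
end

section
/- Let G be a finite simple graph, ℓ ≥ 1 an integer, and assume G is ℓ-tangle-free. If vertices i, j satisfy B^(ℓ)_{ij} − D^(ℓ)_{ij} = 1, then there exists a cycle 𝒞 of G such that d(i, 𝒞) + d(j, 𝒞) ≤ ℓ, where d(i, 𝒞) denotes the minimum graph distance from i to a vertex of 𝒞. -/
/-- The `(i,j)` entry of the distance matrix `D^(ℓ)`: `1` if the graph distance between
`i` and `j` equals `ℓ`, and `0` otherwise. -/
noncomputable def distEntry {V : Type*} (G : SimpleGraph V) (ℓ : ℕ) (i j : V) : ℕ :=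
  if G.edist i j = (ℓ : ℕ∞) then 1 else 0

/-- The distance (in `ℕ∞`) from a vertex `v` to a set `S` of vertices. -/
noncomputable def edistToSet {V : Type*} (G : SimpleGraph V) (S : Set V) (v : V) : ℕ∞ :=
  ⨅ w ∈ S, G.edist v w

namespace SimpleGraph

variable {V : Type*} {G : SimpleGraph V}

lemma Walk.edist_add_edist_le_length {u v w : V} (p : G.Walk u v) (hw : w ∈ p.support) :
    G.edist u w + G.edist w v ≤ p.length := by
  classical
  calc G.edist u w + G.edist w v
      ≤ ((p.takeUntil w hw).length : ℕ∞) + (p.dropUntil w hw).length :=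
        add_le_add (edist_le _) (edist_le _)
    _ = p.length := by rw [← Nat.cast_add, ← Walk.length_append, Walk.take_spec]

lemma Subgraph.exists_isCycle_support_subset_verts {K : G.Subgraph}
    (hK : ¬ K.spanningCoe.IsAcyclic) :
    ∃ (a : V) (c : G.Walk a a), c.IsCycle ∧ ∀ w ∈ c.support, w ∈ K.verts := by
  obtain ⟨a, c, hc⟩ : ∃ (a : V) (c : K.spanningCoe.Walk a a), c.IsCycle := by
    simpa [IsAcyclic] using hK
  refine ⟨a, c.mapLe K.spanningCoe_le, hc.mapLe _, fun w hw => ?_⟩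
  rw [Walk.support_mapLe_eq_support, Walk.mem_support_iff_exists_mem_edges_of_not_nil hc.not_nil]
    at hw
  obtain ⟨e, he, hwe⟩ := hw
  exact K.mem_verts_of_mem_edge (K.edgeSet_spanningCoe ▸ c.edges_subset_edgeSet he) hwe

lemma Walk.exists_isCycle_of_isPath_ne {u v : V} {p q : G.Walk u v} (hp : p.IsPath)
    (hq : q.IsPath) (hpq : p ≠ q) :
    ∃ (a : V) (c : G.Walk a a), c.IsCycle ∧ ∀ w ∈ c.support, w ∈ p.support ∨ w ∈ q.support := by
  set K := p.toSubgraph ⊔ q.toSubgraph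
  have hpK : ∀ e ∈ p.edges, e ∈ K.spanningCoe.edgeSet := fun e he => by
    simp [K, Subgraph.edgeSet_spanningCoe, he]
  have hqK : ∀ e ∈ q.edges, e ∈ K.spanningCoe.edgeSet := fun e he => by
    simp [K, Subgraph.edgeSet_spanningCoe, he]
  have hK : ¬ K.spanningCoe.IsAcyclic := fun hac => hpq <| by
    have := congrArg Subtype.val <|
      (hac.subsingleton_path u v).elim
        ⟨p.transfer _ hpK, hp.transfer hpK⟩ ⟨q.transfer _ hqK, hq.transfer hqK⟩
    exact Walk.ext_support (by simpa using congrArg Walk.support this)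
  simpa [K] using Subgraph.exists_isCycle_support_subset_verts hK

end SimpleGraph

section

open SimpleGraph

variable {V : Type*} {G : SimpleGraph V}

lemma edistToSet_le_edist {S : Set V} {v w : V} (hw : w ∈ S) : edistToSet G S v ≤ G.edist v w :=
  iInf₂_le w hw

lemma exists_isCycle_edistToSet_add_le_of_isPath_ne {ℓ : ℕ} {i j : V} {p q : G.Walk i j}
    (hp : p.IsPath) (hq : q.IsPath) (hpq : p ≠ q) (hpℓ : p.length ≤ ℓ) (hqℓ : q.length ≤ ℓ) :
    ∃ (a : V) (c : G.Walk a a), c.IsCycle ∧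
      edistToSet G {w | w ∈ c.support} i + edistToSet G {w | w ∈ c.support} j ≤ (ℓ : ℕ∞) := by
  obtain ⟨a, c, hc, hcpq⟩ := Walk.exists_isCycle_of_isPath_ne hp hq hpq
  refine ⟨a, c, hc, ?_⟩
  have ha : a ∈ {w | w ∈ c.support} := c.start_mem_support
  calc edistToSet G {w | w ∈ c.support} i + edistToSet G {w | w ∈ c.support} j
      ≤ G.edist i a + G.edist a j := by
        rw [G.edist_comm (u := a)]
        exact add_le_add (edistToSet_le_edist ha) (edistToSet_le_edist ha)
    _ ≤ ℓ := by
      rcases hcpq a ha with hap | haq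
      · exact (p.edist_add_edist_le_length hap).trans (by exact_mod_cast hpℓ)
      · exact (q.edist_add_edist_le_length haq).trans (by exact_mod_cast hqℓ)

lemma exists_isPath_ne_of_pathCount_eq_distEntry_add_one {ℓ : ℕ} {i j : V}
    (h : pathCount G ℓ i j = distEntry G ℓ i j + 1) :
    ∃ p q : G.Walk i j, p.IsPath ∧ q.IsPath ∧ p ≠ q ∧ p.length ≤ ℓ ∧ q.length ≤ ℓ := by
  rw [pathCount, distEntry] at h
  split_ifs at h with hij
  · obtain ⟨p, q, hpq, hS⟩ := Set.ncard_eq_two.mp h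
    have hp : p.IsPath ∧ p.length = ℓ := (Set.ext_iff.mp hS p).2 (by simp)
    have hq : q.IsPath ∧ q.length = ℓ := (Set.ext_iff.mp hS q).2 (by simp)
    exact ⟨p, q, hp.1, hq.1, hpq, hp.2.le, hq.2.le⟩
  · obtain ⟨p, hS⟩ := Set.ncard_eq_one.mp h
    have hp : p.IsPath ∧ p.length = ℓ := (Set.ext_iff.mp hS p).2 rfl
    obtain ⟨q, hq, hql⟩ := p.reachable.exists_path_of_dist
    have hqℓ : q.length < ℓ := by
      have hne : G.dist i j ≠ ℓ := fun hd => hij (by rw [← p.reachable.coe_dist_eq_edist, hd])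
      have := hp.2 ▸ dist_le p
      omega
    exact ⟨p, q, hp.1, hq, by rintro rfl; omega, hp.2.le, hqℓ.le⟩

end

theorem cycle_close_of_pathCount_eq_distEntry_add_one_general
    {V : Type*}
    (G : SimpleGraph V) (ℓ : ℕ) (i j : V)
    (h : pathCount G ℓ i j = distEntry G ℓ i j + 1) :
    ∃ (a : V) (c : G.Walk a a), c.IsCycle ∧
      edistToSet G {w | w ∈ c.support} i + edistToSet G {w | w ∈ c.support} j ≤ (ℓ : ℕ∞) := by
  obtain ⟨p, q, hp, hq, hpq, hpℓ, hqℓ⟩ := exists_isPath_ne_of_pathCount_eq_distEntry_add_one h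
  exact exists_isCycle_edistToSet_add_le_of_isPath_ne hp hq hpq hpℓ hqℓ

/-- In an `ℓ`-tangle-free graph, if `B^(ℓ)_{ij} - D^(ℓ)_{ij} = 1` then there is a cycle
`𝒞` with `d(i, 𝒞) + d(j, 𝒞) ≤ ℓ`. -/
theorem cycle_close_of_pathCount_eq_distEntry_add_one
    {V : Type*} [Fintype V] [DecidableEq V]
    (G : SimpleGraph V) (ℓ : ℕ) (hℓ : 1 ≤ ℓ) (htf : TangleFree G ℓ) (i j : V)
    (h : pathCount G ℓ i j = distEntry G ℓ i j + 1) :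
    ∃ (a : V) (c : G.Walk a a), c.IsCycle ∧
      edistToSet G {w | w ∈ c.support} i + edistToSet G {w | w ∈ c.support} j ≤ (ℓ : ℕ∞) :=
  cycle_close_of_pathCount_eq_distEntry_add_one_general G ℓ i j h
end

section
/- Let n, ℓ ∈ ℕ, let c : {1, …, n} → ℕ be any map, and let P be the n×n symmetric 0–1 matrix with P_{ij} = 1 if and only if c(i) + c(j) ≤ ℓ. For t ∈ {0, …, ℓ} let S_t = #{i : c(i) = t}, and let Q be the (ℓ+1)×(ℓ+1) symmetric matrix with Q_{tu} = √(S_t S_u) if t + u ≤ ℓ and Q_{tu} = 0 otherwise. Then the spectral radius of P equals the spectral radius of Q. -/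
/-- The spectral radius of a real symmetric matrix, defined (equivalently) as the ℓ2
operator norm of the induced operator on Euclidean space. -/
noncomputable def specRad {n : Type*} [Fintype n] [DecidableEq n]
    (A : Matrix n n ℝ) : ℝ :=
  ‖Matrix.toEuclideanCLM (𝕜 := ℝ) A‖

open scoped Matrix.Norms.L2Operator
open scoped Matrix

lemma aux_norm_U_le_one {m k : Type*} [Fintype m] [Fintype k] [DecidableEq m] [DecidableEq k]
    (U : Matrix m k ℝ) (hE : (Uᴴ * U) * (Uᴴ * U) = Uᴴ * U) : ‖U‖ ≤ 1 := by
  have h1 : ‖U‖ * ‖U‖ = ‖Uᴴ * U‖ := (Matrix.l2_opNorm_conjTranspose_mul_self U).symm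
  have h2 : ‖Uᴴ * U‖ * ‖Uᴴ * U‖ = ‖Uᴴ * U‖ := by
    have h3 := Matrix.l2_opNorm_conjTranspose_mul_self (Uᴴ * U)
    rw [Matrix.conjTranspose_mul, Matrix.conjTranspose_conjTranspose, hE] at h3
    exact h3.symm
  have hx : ‖Uᴴ * U‖ ≤ 1 := by
    nlinarith [norm_nonneg (Uᴴ * U), mul_self_nonneg (‖Uᴴ * U‖ - 1)]
  nlinarith [norm_nonneg U, mul_self_nonneg (‖U‖ - 1)]

lemma aux_norm_eq_of_conj {m k : Type*} [Fintype m] [Fintype k] [DecidableEq m] [DecidableEq k]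
    (U : Matrix m k ℝ) (P : Matrix m m ℝ) (Q : Matrix k k ℝ)
    (h1 : P = U * Q * Uᴴ) (h2 : Q = Uᴴ * P * U) (hU : ‖U‖ ≤ 1) : ‖P‖ = ‖Q‖ := by
  have hUc : ‖Uᴴ‖ ≤ 1 := by rw [Matrix.l2_opNorm_conjTranspose]; exact hU
  have le1 : ‖P‖ ≤ ‖Q‖ := by
    rw [h1]
    calc ‖U * Q * Uᴴ‖ ≤ ‖U * Q‖ * ‖Uᴴ‖ := Matrix.l2_opNorm_mul _ _
      _ ≤ ‖Q‖ := by
          have h3 := Matrix.l2_opNorm_mul U Q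
          nlinarith [norm_nonneg (U * Q), norm_nonneg U, norm_nonneg Q, norm_nonneg Uᴴ]
  have le2 : ‖Q‖ ≤ ‖P‖ := by
    rw [h2]
    calc ‖Uᴴ * P * U‖ ≤ ‖Uᴴ * P‖ * ‖U‖ := Matrix.l2_opNorm_mul _ _
      _ ≤ ‖P‖ := by
          have h3 := Matrix.l2_opNorm_mul Uᴴ P
          nlinarith [norm_nonneg (Uᴴ * P), norm_nonneg U, norm_nonneg P, norm_nonneg Uᴴ]
  exact le_antisymm le1 le2

lemma aux_sum_fin_ite {ℓ : ℕ} (a : ℕ) (f : Fin (ℓ + 1) → ℝ) :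
    (∑ t : Fin (ℓ + 1), if a = (t : ℕ) then f t else 0) =
      if h : a ≤ ℓ then f ⟨a, Nat.lt_succ_of_le h⟩ else 0 := by
  split
  case isTrue h =>
    rw [Finset.sum_eq_single ⟨a, Nat.lt_succ_of_le h⟩]
    · simp
    · intro t _ ht
      rw [if_neg]
      intro hc
      exact ht (by ext; simp [← hc])
    · simp
  case isFalse h =>
    apply Finset.sum_eq_zero
    intro t _
    rw [if_neg]
    intro hc
    exact h (hc ▸ Nat.lt_succ_iff.mp t.isLt)

/-- Let `P` be the `n × n` 0–1 matrix with `P i j = 1` iff `c i + c j ≤ ℓ`, and let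
`Q` be the `(ℓ+1) × (ℓ+1)` matrix with `Q t u = √(S_t S_u)` when `t + u ≤ ℓ` and `0`
otherwise, where `S_t = #{i | c i = t}`. Then `P` and `Q` have the same spectral radius. -/
theorem specRad_levelMatrix_eq {n ℓ : ℕ} (c : Fin n → ℕ) :
    specRad (Matrix.of fun i j : Fin n => if c i + c j ≤ ℓ then (1 : ℝ) else 0) =
      specRad (Matrix.of fun t u : Fin (ℓ + 1) =>
        if (t : ℕ) + (u : ℕ) ≤ ℓ then
          Real.sqrt (({i : Fin n | c i = (t : ℕ)}.ncard : ℝ) *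
            ({i : Fin n | c i = (u : ℕ)}.ncard : ℝ))
        else 0) := by
  classical
  set S : ℕ → ℝ := fun a => (({i : Fin n | c i = a}.ncard : ℝ)) with hSdef
  have hSnn : ∀ a, 0 ≤ S a := fun a => Nat.cast_nonneg _
  have hSsum : ∀ a, S a = ∑ i : Fin n, (if c i = a then (1:ℝ) else 0) := by
    intro a
    rw [Finset.sum_boole]
    show (({i : Fin n | c i = a}.ncard : ℝ)) = _
    norm_cast
    rw [Set.ncard_eq_toFinset_card']
    congr 1
    ext i
    simp
  have hSpos : ∀ a : ℕ, (∃ i, c i = a) → 0 < S a := by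
    rintro a ⟨i, hi⟩
    have h1 : {j : Fin n | c j = a}.Nonempty := ⟨i, hi⟩
    have h2 := (Set.ncard_pos (Set.toFinite _)).mpr h1
    show (0:ℝ) < (({j : Fin n | c j = a}.ncard : ℝ))
    exact_mod_cast h2
  -- sums over i of indicator of c i = a times constant
  have hIndSum : ∀ (a : ℕ) (x : ℝ),
      (∑ i : Fin n, if c i = a then x else 0) = S a * x := by
    intro a x
    have h1 : (∑ i : Fin n, if c i = a then x else 0)
        = (∑ i : Fin n, (if c i = a then (1:ℝ) else 0) * x) := by
      apply Finset.sum_congr rfl; intro i _; split <;> simp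
    rw [h1, ← Finset.sum_mul, ← hSsum]
  have hsqrt_mul : ∀ a b : ℕ, Real.sqrt (S a * S b) = Real.sqrt (S a) * Real.sqrt (S b) :=
    fun a b => Real.sqrt_mul (hSnn a) _
  have hSsqrt : ∀ a : ℕ, S a * (Real.sqrt (S a))⁻¹ = Real.sqrt (S a) := by
    intro a
    rw [← div_eq_mul_inv, Real.div_sqrt]
  set P : Matrix (Fin n) (Fin n) ℝ :=
    Matrix.of (fun i j : Fin n => if c i + c j ≤ ℓ then (1 : ℝ) else 0) with hP
  set Q : Matrix (Fin (ℓ+1)) (Fin (ℓ+1)) ℝ :=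
    Matrix.of (fun t u : Fin (ℓ + 1) =>
        if (t : ℕ) + (u : ℕ) ≤ ℓ then Real.sqrt (S (t : ℕ) * S (u : ℕ)) else 0) with hQ
  set U : Matrix (Fin n) (Fin (ℓ+1)) ℝ :=
    Matrix.of (fun (i : Fin n) (t : Fin (ℓ+1)) =>
      if c i = (t : ℕ) then (Real.sqrt (S (t:ℕ)))⁻¹ else 0) with hU
  show specRad P = specRad Q
  -- E = Uᴴ U is a 0/1 diagonal projection
  have hE' : Uᴴ * U = Matrix.diagonal (fun t : Fin (ℓ+1) => if S (t:ℕ) = 0 then 0 else 1) := by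
    ext t u
    rw [Matrix.mul_apply]
    by_cases htu : t = u
    · subst htu
      simp only [Matrix.diagonal_apply_eq]
      have h1 : ∀ i : Fin n, Uᴴ t i * U i t =
          if c i = (t:ℕ) then ((Real.sqrt (S (t:ℕ)))⁻¹ * (Real.sqrt (S (t:ℕ)))⁻¹) else 0 := by
        intro i
        rw [Matrix.conjTranspose_apply]
        simp only [hU, Matrix.of_apply, star_trivial]
        split <;> ring
      rw [Finset.sum_congr rfl fun i _ => h1 i, hIndSum]
      by_cases hs : S (t:ℕ) = 0
      · simp [hs]
      · rw [if_neg hs]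
        have h0 : 0 < S (t:ℕ) := lt_of_le_of_ne (hSnn _) (Ne.symm hs)
        have h2 : Real.sqrt (S (t:ℕ)) ≠ 0 := by positivity
        rw [← mul_assoc, hSsqrt, ← Real.div_sqrt (x := S (t:ℕ))]
        field_simp
    · rw [Matrix.diagonal_apply_ne _ htu]
      apply Finset.sum_eq_zero
      intro i _
      rw [Matrix.conjTranspose_apply]
      simp only [hU, Matrix.of_apply, star_trivial]
      have : ¬ (c i = (t:ℕ) ∧ c i = (u:ℕ)) := by
        rintro ⟨h1, h2⟩
        exact htu (Fin.ext (by omega))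
      by_cases h1 : c i = (t:ℕ)
      · rw [if_neg (fun h2 => this ⟨h1, h2⟩), if_pos h1, mul_zero]
      · rw [if_neg h1, zero_mul]
  have hE : (Uᴴ * U) * (Uᴴ * U) = Uᴴ * U := by
    rw [hE', Matrix.diagonal_mul_diagonal]
    apply congrArg Matrix.diagonal
    funext t
    by_cases hs : S (t:ℕ) = 0 <;> simp [hs]
  -- sums of U-entries against a function
  have hUsum : ∀ (i : Fin n) (f : Fin (ℓ+1) → ℝ),
      (∑ t : Fin (ℓ+1), U i t * f t) =
        if h : c i ≤ ℓ then (Real.sqrt (S (c i)))⁻¹ * f ⟨c i, Nat.lt_succ_of_le h⟩ else 0 := by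
    intro i f
    rw [← aux_sum_fin_ite (c i) (fun t => (Real.sqrt (S (t:ℕ)))⁻¹ * f t)]
    · apply Finset.sum_congr rfl
      intro t _
      simp only [hU, Matrix.of_apply]
      by_cases h : c i = (t:ℕ)
      · rw [if_pos h, if_pos h]
      · rw [if_neg h, if_neg h, zero_mul]
  -- key identity 1 : P = U * Q * Uᴴ
  have hPU : P = U * Q * Uᴴ := by
    ext i j
    rw [Matrix.mul_assoc, Matrix.mul_apply]
    have hrow : ∀ t, (Q * Uᴴ) t j =
        if h : c j ≤ ℓ then
          (if (t:ℕ) + c j ≤ ℓ then Real.sqrt (S (t:ℕ) * S (c j)) else 0)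
            * (Real.sqrt (S (c j)))⁻¹
        else 0 := by
      intro t
      rw [Matrix.mul_apply]
      have h1 : ∀ u, Q t u * Uᴴ u j = U j u *
          ((if (t:ℕ) + (u:ℕ) ≤ ℓ then Real.sqrt (S (t:ℕ) * S (u:ℕ)) else 0)) := by
        intro u
        rw [Matrix.conjTranspose_apply]
        simp only [hQ, Matrix.of_apply, star_trivial]
        ring
      rw [Finset.sum_congr rfl (fun u _ => h1 u),
        hUsum j (fun u => if (t:ℕ) + (u:ℕ) ≤ ℓ then Real.sqrt (S (t:ℕ) * S (u:ℕ)) else 0)]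
      split
      case isTrue h => rw [mul_comm]
      case isFalse h => rfl
    rw [Finset.sum_congr rfl (fun t _ => by rw [hrow t]),
      hUsum i (fun t => if h : c j ≤ ℓ then
          (if (t:ℕ) + c j ≤ ℓ then Real.sqrt (S (t:ℕ) * S (c j)) else 0)
            * (Real.sqrt (S (c j)))⁻¹ else 0)]
    by_cases hi : c i ≤ ℓ
    · rw [dif_pos hi]
      simp only
      by_cases hj : c j ≤ ℓ
      · rw [dif_pos hj]
        by_cases hij : c i + c j ≤ ℓ
        · rw [if_pos hij, hsqrt_mul]
          have h1 : Real.sqrt (S (c i)) ≠ 0 := by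
            have := hSpos (c i) ⟨i, rfl⟩; positivity
          have h2 : Real.sqrt (S (c j)) ≠ 0 := by
            have := hSpos (c j) ⟨j, rfl⟩; positivity
          have h3 : P i j = 1 := by rw [hP]; simp [hij]
          rw [h3]
          field_simp
        · rw [if_neg hij]
          have h3 : P i j = 0 := by rw [hP]; simp [hij]
          rw [h3]; ring
      · rw [dif_neg hj]
        have h3 : P i j = 0 := by rw [hP]; simp only [Matrix.of_apply]; rw [if_neg (by omega)]
        rw [h3]; ring
    · rw [dif_neg hi]
      have h3 : P i j = 0 := by rw [hP]; simp only [Matrix.of_apply]; rw [if_neg (by omega)]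
      rw [h3]
  -- key identity 2 : Q = Uᴴ * P * U
  have hQU : Q = Uᴴ * P * U := by
    ext t u
    rw [Matrix.mul_assoc, Matrix.mul_apply]
    have hrow : ∀ i : Fin n, (P * U) i u =
        S (u:ℕ) * ((if c i + (u:ℕ) ≤ ℓ then (1:ℝ) else 0) * (Real.sqrt (S (u:ℕ)))⁻¹) := by
      intro i
      rw [Matrix.mul_apply]
      have h1 : ∀ j, P i j * U j u =
          if c j = (u:ℕ) then ((if c i + (u:ℕ) ≤ ℓ then (1:ℝ) else 0)
            * (Real.sqrt (S (u:ℕ)))⁻¹) else 0 := by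
        intro j
        simp only [hP, hU, Matrix.of_apply]
        by_cases h2 : c j = (u:ℕ)
        · rw [if_pos h2, if_pos h2, h2]
        · rw [if_neg h2, if_neg h2, mul_zero]
      rw [Finset.sum_congr rfl (fun j _ => h1 j), hIndSum]
    rw [Finset.sum_congr rfl (fun i _ => by rw [hrow i])]
    have h1 : ∀ i : Fin n, Uᴴ t i *
        (S (u:ℕ) * ((if c i + (u:ℕ) ≤ ℓ then (1:ℝ) else 0) * (Real.sqrt (S (u:ℕ)))⁻¹)) =
        if c i = (t:ℕ) then ((Real.sqrt (S (t:ℕ)))⁻¹ *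
          (S (u:ℕ) * ((if (t:ℕ) + (u:ℕ) ≤ ℓ then (1:ℝ) else 0)
            * (Real.sqrt (S (u:ℕ)))⁻¹))) else 0 := by
      intro i
      rw [Matrix.conjTranspose_apply]
      simp only [hU, Matrix.of_apply, star_trivial]
      by_cases h2 : c i = (t:ℕ)
      · rw [if_pos h2, if_pos h2, h2]
      · rw [if_neg h2, if_neg h2, zero_mul]
    rw [Finset.sum_congr rfl (fun i _ => h1 i), hIndSum]
    simp only [hQ, Matrix.of_apply]
    by_cases h2 : (t:ℕ) + (u:ℕ) ≤ ℓ
    · rw [if_pos h2, if_pos h2, hsqrt_mul]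
      have h3 : S (t:ℕ) * ((Real.sqrt (S (t:ℕ)))⁻¹ * (S (u:ℕ) * (1 * (Real.sqrt (S (u:ℕ)))⁻¹)))
          = (S (t:ℕ) * (Real.sqrt (S (t:ℕ)))⁻¹) * (S (u:ℕ) * (Real.sqrt (S (u:ℕ)))⁻¹) := by ring
      rw [h3, hSsqrt, hSsqrt]
    · rw [if_neg h2, if_neg h2]
      ring_nf
  -- conclude
  have hUnorm : ‖U‖ ≤ 1 := aux_norm_U_le_one U hE
  have := aux_norm_eq_of_conj U P Q hPU hQU hUnorm
  unfold specRad
  rw [← Matrix.cstar_norm_def, ← Matrix.cstar_norm_def]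
  exact this
end

section
/- Let G and G̃ be finite simple graphs on the same vertex set V, let K ⊆ V, and assume that every edge in the symmetric difference of the edge sets of G and G̃ has at least one endpoint in K. Let ℓ ≥ 1 and suppose two vertices i, j satisfy D^(ℓ)_{ij} ≠ D̃^(ℓ)_{ij}, i.e. exactly one of d_G(i,j) = ℓ and d_{G̃}(i,j) = ℓ holds. Then there exists H ∈ {G, G̃} such that d_H(i, K) + d_H(j, K) ≤ ℓ, where d_H(i, K) = min over k ∈ K of the graph distance d_H(i, k). -/
private lemma through_K {V : Type*} (H : SimpleGraph V) (K : Set V) {i j k : V}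
    (p : H.Walk i j) (hk : k ∈ p.support) (hkK : k ∈ K) (ℓ : ℕ) (hlen : p.length ≤ ℓ) :
    edistToSet H K i + edistToSet H K j ≤ (ℓ : ℕ∞) := by
  classical
  have h1 : edistToSet H K i ≤ H.edist i k := by
    refine iInf_le_of_le k ?_
    exact iInf_le_of_le hkK le_rfl
  have h2 : edistToSet H K j ≤ H.edist j k := by
    refine iInf_le_of_le k ?_
    exact iInf_le_of_le hkK le_rfl
  have e1 : H.edist i k ≤ (p.takeUntil k hk).length := SimpleGraph.edist_le _
  have e2 : H.edist j k ≤ (p.dropUntil k hk).length := by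
    have := SimpleGraph.edist_le (p.dropUntil k hk).reverse
    simpa using this
  have hsum : (p.takeUntil k hk).length + (p.dropUntil k hk).length = p.length := by
    rw [← SimpleGraph.Walk.length_append, p.take_spec hk]
  calc edistToSet H K i + edistToSet H K j
      ≤ ((p.takeUntil k hk).length : ℕ∞) + (p.dropUntil k hk).length :=
        add_le_add (h1.trans e1) (h2.trans e2)
    _ = (p.length : ℕ∞) := by rw [← Nat.cast_add, hsum]
    _ ≤ (ℓ : ℕ∞) := by exact_mod_cast hlen

private lemma bad_edge_case {V : Type*} (G G' : SimpleGraph V) (K : Set V)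
    (hK : ∀ u v : V, ¬(G.Adj u v ↔ G'.Adj u v) → u ∈ K ∨ v ∈ K)
    {i j : V} (p : G.Walk i j) (ℓ : ℕ) (hlen : p.length ≤ ℓ)
    (hbad : ¬ ∀ e ∈ p.edges, e ∈ G'.edgeSet) :
    edistToSet G K i + edistToSet G K j ≤ (ℓ : ℕ∞) := by
  push_neg at hbad
  obtain ⟨e, he, he'⟩ := hbad
  induction e with
  | h u v =>
    have hadj : G.Adj u v := p.adj_of_mem_edges he
    have hne : ¬(G.Adj u v ↔ G'.Adj u v) := by
      intro h
      exact he' (h.mp hadj)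
    rcases hK u v hne with hu | hv
    · exact through_K G K p (p.fst_mem_support_of_mem_edges he) hu ℓ hlen
    · exact through_K G K p (p.snd_mem_support_of_mem_edges he) hv ℓ hlen

private lemma key {V : Type*} (G G' : SimpleGraph V) (K : Set V)
    (hK : ∀ u v : V, ¬(G.Adj u v ↔ G'.Adj u v) → u ∈ K ∨ v ∈ K)
    (ℓ : ℕ) (i j : V) (h1 : G.edist i j = (ℓ : ℕ∞)) (h2 : G'.edist i j ≠ (ℓ : ℕ∞)) :
    (edistToSet G K i + edistToSet G K j ≤ (ℓ : ℕ∞)) ∨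
    (edistToSet G' K i + edistToSet G' K j ≤ (ℓ : ℕ∞)) := by
  obtain ⟨p, hp⟩ := SimpleGraph.exists_walk_of_edist_eq_coe h1
  by_cases hall : ∀ e ∈ p.edges, e ∈ G'.edgeSet
  · -- transfer to G'
    right
    have hle : G'.edist i j ≤ (ℓ : ℕ∞) := by
      have := SimpleGraph.edist_le (p.transfer G' hall)
      rwa [SimpleGraph.Walk.length_transfer, hp] at this
    have hlt : G'.edist i j < (ℓ : ℕ∞) := lt_of_le_of_ne hle h2
    obtain ⟨m, hm, hmℓ⟩ : ∃ m : ℕ, G'.edist i j = (m : ℕ∞) ∧ m ≤ ℓ := by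
      obtain ⟨m, hm⟩ := WithTop.ne_top_iff_exists.mp (hlt.trans_le le_top).ne
      exact ⟨m, hm.symm, Nat.cast_le.mp (hm ▸ hle)⟩
    obtain ⟨q, hq⟩ := SimpleGraph.exists_walk_of_edist_eq_coe hm
    by_cases hall' : ∀ e ∈ q.edges, e ∈ G.edgeSet
    · exfalso
      have hle' : G.edist i j ≤ (m : ℕ∞) := by
        have := SimpleGraph.edist_le (q.transfer G hall')
        rwa [SimpleGraph.Walk.length_transfer, hq] at this
      rw [h1] at hle'
      have : G'.edist i j < (m : ℕ∞) := hlt.trans_le hle'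
      rw [hm] at this
      exact absurd this (lt_irrefl _)
    · have hK' : ∀ u v : V, ¬(G'.Adj u v ↔ G.Adj u v) → u ∈ K ∨ v ∈ K := fun u v h =>
        hK u v (fun h' => h h'.symm)
      exact bad_edge_case G' G K hK' q ℓ (by omega) hall'
  · left
    exact bad_edge_case G G' K hK p ℓ (by omega) hall

/-- If every edge in the symmetric difference of `G` and `G'` has an endpoint in `K`, and
the `(i,j)` entries of the distance matrices `D^(ℓ)` of `G` and `G'` differ, then in one
of the two graphs `H ∈ {G, G'}` one has `d_H(i, K) + d_H(j, K) ≤ ℓ`. -/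
theorem distMatrix_entry_change_close_to_K {V : Type*} [Fintype V]
    (G G' : SimpleGraph V) (K : Set V)
    (hK : ∀ u v : V, ¬(G.Adj u v ↔ G'.Adj u v) → u ∈ K ∨ v ∈ K)
    (ℓ : ℕ) (hℓ : 1 ≤ ℓ) (i j : V)
    (hij : ¬(G.edist i j = (ℓ : ℕ∞) ↔ G'.edist i j = (ℓ : ℕ∞))) :
    ∃ H : SimpleGraph V, (H = G ∨ H = G') ∧
      edistToSet H K i + edistToSet H K j ≤ (ℓ : ℕ∞) := by
  rw [iff_iff_implies_and_implies, not_and_or] at hij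
  rcases hij with h | h
  · push_neg at h
    rcases key G G' K hK ℓ i j h.1 h.2 with hc | hc
    · exact ⟨G, Or.inl rfl, hc⟩
    · exact ⟨G', Or.inr rfl, hc⟩
  · push_neg at h
    have hK' : ∀ u v : V, ¬(G'.Adj u v ↔ G.Adj u v) → u ∈ K ∨ v ∈ K := fun u v hn =>
      hK u v (fun h' => hn h'.symm)
    rcases key G' G K hK' ℓ i j h.1 h.2 with hc | hc
    · exact ⟨G', Or.inr rfl, hc⟩
    · exact ⟨G, Or.inl rfl, hc⟩
end
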